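/- Let ξ be an extremal real number and let (y_i)_{i≥1} be a sequence of approximation triples for ξ, with y_i = (y_{i,0}, y_{i,1}, y_{i,2}). Assume there exist a constant c₁ > 0 and an index i₀ such that the distance from y_{i,0}·ξ³ to the nearest integer is at least c₁ for all i ≥ i₀. Then there exists a constant c₂ > 0 such that every monic polynomial P ∈ ℤ[T] of degree at most 3 satisfies |P(ξ)| ≥ c₂·H(P)^{-γ}. -/
import Mathlib


open Polynomial Matrix

/-- The golden ratio γ = (1+√5)/2. -/
noncomputable def golden : ℝ := (1 + Real.sqrt 5) / 2

/-- Norm of a point of ℤ³: max of absolute values of coordinates. -/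
def nrm (x : ℤ × ℤ × ℤ) : ℝ := max |(x.1 : ℝ)| (max |(x.2.1 : ℝ)| |(x.2.2 : ℝ)|)

/-- L_ξ(x) = max(|x₁ − ξx₀|, |x₂ − ξ²x₀|). -/
noncomputable def Lxi (ξ : ℝ) (x : ℤ × ℤ × ℤ) : ℝ :=
  max |(x.2.1 : ℝ) - ξ * (x.1 : ℝ)| |(x.2.2 : ℝ) - ξ ^ 2 * (x.1 : ℝ)|

/-- det(x) = x₀x₂ − x₁². -/
def det2 (x : ℤ × ℤ × ℤ) : ℤ := x.1 * x.2.2 - x.2.1 ^ 2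

/-- Determinant of the 3×3 matrix with rows x, y, z. -/
def det3 (x y z : ℤ × ℤ × ℤ) : ℤ :=
  x.1 * (y.2.1 * z.2.2 - y.2.2 * z.2.1)
    - x.2.1 * (y.1 * z.2.2 - y.2.2 * z.1)
    + x.2.2 * (y.1 * z.2.1 - y.2.1 * z.1)

/-- A point of ℤ³ is primitive if its coordinates are relatively prime. -/
def Primitive (x : ℤ × ℤ × ℤ) : Prop := Int.gcd x.1 (Int.gcd x.2.1 x.2.2 : ℤ) = 1

/-- ξ is neither rational nor quadratic over ℚ: it is a root of no nonzero
rational polynomial of degree at most 2. -/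
def NotQuadratic (ξ : ℝ) : Prop :=
  ∀ p : Polynomial ℚ, p ≠ 0 → p.natDegree ≤ 2 → Polynomial.aeval ξ p ≠ 0

/-- ξ is an extremal real number. -/
def Extremal (ξ : ℝ) : Prop :=
  NotQuadratic ξ ∧ ∃ c : ℝ, 0 < c ∧ ∀ X : ℝ, 1 ≤ X → ∃ x : ℤ × ℤ × ℤ, x ≠ 0 ∧
    |(x.1 : ℝ)| ≤ X ∧ |(x.1 : ℝ) * ξ - (x.2.1 : ℝ)| ≤ c * X ^ (-1 / golden) ∧
    |(x.1 : ℝ) * ξ ^ 2 - (x.2.2 : ℝ)| ≤ c * X ^ (-1 / golden)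

/-- (y_i)_{i≥1} is a sequence of approximation triples for ξ (the value y 0 is irrelevant). -/
def ApproxTriples (ξ : ℝ) (y : ℕ → ℤ × ℤ × ℤ) : Prop :=
  (∀ i, 1 ≤ i → y i ≠ 0 ∧ Primitive (y i)) ∧
  (∀ B : ℝ, ∃ i, 1 ≤ i ∧ B < nrm (y i)) ∧
  ∃ c : ℝ, 1 ≤ c ∧ ∀ i, 1 ≤ i →
    c⁻¹ * nrm (y i) ^ golden ≤ nrm (y (i + 1)) ∧
    nrm (y (i + 1)) ≤ c * nrm (y i) ^ golden ∧
    c⁻¹ * (nrm (y i))⁻¹ ≤ Lxi ξ (y i) ∧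
    Lxi ξ (y i) ≤ c * (nrm (y i))⁻¹ ∧
    1 ≤ |det2 (y i)| ∧ (|det2 (y i)| : ℝ) ≤ c ∧
    1 ≤ |det3 (y i) (y (i + 1)) (y (i + 2))| ∧
    (|det3 (y i) (y (i + 1)) (y (i + 2))| : ℝ) ≤ c

/-- Height of an integer polynomial: max of the absolute values of its coefficients. -/
noncomputable def heightP (P : Polynomial ℤ) : ℝ :=
  ((P.support.sup fun n => (P.coeff n).natAbs : ℕ) : ℝ)


lemma golden_nonneg : 0 ≤ golden := by
  unfold golden
  positivity

lemma nrm_nonneg (x : ℤ × ℤ × ℤ) : 0 ≤ nrm x := by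
  unfold nrm
  positivity

lemma abs_coeff_le_heightP (P : Polynomial ℤ) (n : ℕ) : |(P.coeff n : ℝ)| ≤ heightP P := by
  by_cases h : P.coeff n = 0
  · simp only [h, Int.cast_zero, abs_zero]
    unfold heightP
    positivity
  · have hn : n ∈ P.support := Polynomial.mem_support_iff.mpr h
    have h1 : (P.coeff n).natAbs ≤ P.support.sup fun m => (P.coeff m).natAbs :=
      Finset.le_sup (f := fun m => (P.coeff m).natAbs) hn
    have h3 : |P.coeff n| ≤ ((P.support.sup fun m => (P.coeff m).natAbs : ℕ) : ℤ) := by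
      rw [Int.abs_eq_natAbs]
      exact_mod_cast h1
    have h4 := (Int.cast_le (R := ℝ)).mpr h3
    rw [Int.cast_abs] at h4
    unfold heightP
    exact_mod_cast h4

lemma one_le_heightP (P : Polynomial ℤ) (hP : P.Monic) : 1 ≤ heightP P := by
  have := abs_coeff_le_heightP P P.natDegree
  rwa [hP.coeff_natDegree, Int.cast_one, abs_one] at this

lemma one_le_nrm (x : ℤ × ℤ × ℤ) (hx : x ≠ 0) : 1 ≤ nrm x := by
  obtain ⟨a, b, d⟩ := x
  have h : a ≠ 0 ∨ b ≠ 0 ∨ d ≠ 0 := by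
    by_contra h
    push_neg at h
    exact hx (by simp [Prod.ext_iff, h.1, h.2.1, h.2.2])
  unfold nrm
  rcases h with h | h | h
  · refine le_max_of_le_left ?_
    exact_mod_cast Int.one_le_abs (by simpa using h)
  · refine le_max_of_le_right (le_max_of_le_left ?_)
    exact_mod_cast Int.one_le_abs (by simpa using h)
  · refine le_max_of_le_right (le_max_of_le_right ?_)
    exact_mod_cast Int.one_le_abs (by simpa using h)

set_option maxHeartbeats 1000000 in
/-- If the distances from y_{i,0}ξ³ to the nearest integer stay bounded away from 0,
then ξ is badly approximable by monic cubic integer polynomials. -/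
theorem stmt11 (ξ : ℝ) (y : ℕ → ℤ × ℤ × ℤ)
    (hξ : Extremal ξ) (hy : ApproxTriples ξ y)
    (c₁ : ℝ) (hc₁ : 0 < c₁) (i₀ : ℕ) (hi₀ : 1 ≤ i₀)
    (hdist : ∀ i, i₀ ≤ i → ∀ m : ℤ, c₁ ≤ |((y i).1 : ℝ) * ξ ^ 3 - (m : ℝ)|) :
    ∃ c₂ : ℝ, 0 < c₂ ∧ ∀ P : Polynomial ℤ, P.Monic → P.natDegree ≤ 3 →
      c₂ * heightP P ^ (-golden) ≤ |(Polynomial.aeval ξ P : ℝ)| := by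
  classical
  obtain ⟨hnq, -⟩ := hξ
  obtain ⟨h1, h2, c, hc1, hc⟩ := hy
  have hc0 : (0:ℝ) < c := lt_of_lt_of_le one_pos hc1
  set M : ℝ := max 1 |ξ| with hM
  have hM1 : (1:ℝ) ≤ M := le_max_left _ _
  have hM0 : (0:ℝ) < M := lt_of_lt_of_le one_pos hM1
  have hN0 : (1:ℝ) ≤ nrm (y i₀) := one_le_nrm _ (h1 i₀ hi₀).1
  have hApos : (0:ℝ) < c₁ / (2 * nrm (y i₀)) := div_pos hc₁ (by linarith)
  have hB0pos : (0:ℝ) < 4 * c / c₁ := div_pos (by linarith) hc₁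
  have hB0g : (0:ℝ) < (4 * c / c₁) ^ golden := Real.rpow_pos_of_pos hB0pos golden
  have hDpos : (0:ℝ) < c₁ / (2 * c * (4 * c / c₁) ^ golden) := by
    apply div_pos hc₁
    exact mul_pos (by linarith) hB0g
  set A : ℝ := c₁ / (2 * nrm (y i₀)) with hA
  set D : ℝ := c₁ / (2 * c * (4 * c / c₁) ^ golden) with hD
  refine ⟨min A D / M ^ 3, div_pos (lt_min hApos hDpos) (pow_pos hM0 3), ?_⟩
  intro P hPm hPd
  set H : ℝ := heightP P with hH
  have hH1 : (1:ℝ) ≤ H := one_le_heightP P hPm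
  have hH0 : (0:ℝ) ≤ H := le_trans zero_le_one hH1
  set Q : Polynomial ℤ := P * Polynomial.X ^ (3 - P.natDegree) with hQdef
  have hQm : Q.Monic := hPm.mul (Polynomial.monic_X_pow _)
  have hQd : Q.natDegree = 3 := by
    rw [hQdef, hPm.natDegree_mul (Polynomial.monic_X_pow _), Polynomial.natDegree_X_pow]
    omega
  have hQc : ∀ n, |(Q.coeff n : ℝ)| ≤ H := by
    intro n
    rw [hQdef, Polynomial.coeff_mul_X_pow']
    split
    · exact abs_coeff_le_heightP P _
    · simpa using hH0
  have hQ3 : ((Q.coeff 3 : ℤ) : ℝ) = 1 := by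
    have := hQm.coeff_natDegree
    rw [hQd] at this
    exact_mod_cast this
  have hQeval : (Polynomial.aeval ξ Q : ℝ) =
      ((Q.coeff 0 : ℤ) : ℝ) + ((Q.coeff 1 : ℤ) : ℝ) * ξ + ((Q.coeff 2 : ℤ) : ℝ) * ξ ^ 2
        + ξ ^ 3 := by
    rw [Polynomial.aeval_eq_sum_range' (n := 4) (by omega) ξ]
    simp only [Finset.sum_range_succ, Finset.sum_range_zero, zsmul_eq_mul, zero_add]
    rw [hQ3]
    ring
  -- choose minimal index
  have hex : ∃ i, i₀ ≤ i ∧ 4 * c * H / c₁ ≤ nrm (y i) := by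
    obtain ⟨j, hj1, hjB⟩ := h2 (4 * c * H / c₁ + ∑ t ∈ Finset.range i₀, nrm (y t))
    have hpos : (0:ℝ) < 4 * c * H / c₁ := div_pos (by nlinarith) hc₁
    refine ⟨j, ?_, ?_⟩
    · by_contra hlt
      push_neg at hlt
      have hmem : j ∈ Finset.range i₀ := Finset.mem_range.mpr hlt
      have hle : nrm (y j) ≤ ∑ t ∈ Finset.range i₀, nrm (y t) :=
        Finset.single_le_sum (fun t _ => nrm_nonneg _) hmem
      linarith
    · have hs : (0:ℝ) ≤ ∑ t ∈ Finset.range i₀, nrm (y t) :=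
        Finset.sum_nonneg fun t _ => nrm_nonneg _
      linarith
  obtain ⟨k, hkspec, hkmin⟩ :
      ∃ k : ℕ, (i₀ ≤ k ∧ 4 * c * H / c₁ ≤ nrm (y k)) ∧
        ∀ j, j < k → ¬(i₀ ≤ j ∧ 4 * c * H / c₁ ≤ nrm (y j)) :=
    ⟨Nat.find hex, Nat.find_spec hex, fun j hj => Nat.find_min hex hj⟩
  clear hex
  obtain ⟨hki₀, hkB⟩ := hkspec
  have hk1 : 1 ≤ k := le_trans hi₀ hki₀
  have hBH : (0:ℝ) < 4 * c * H / c₁ := div_pos (by nlinarith) hc₁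
  have hNpos : (0:ℝ) < nrm (y k) := lt_of_lt_of_le hBH hkB
  obtain ⟨-, -, -, hL, -⟩ := hc k hk1
  have hL1 : |((y k).2.1 : ℝ) - ξ * ((y k).1 : ℝ)| ≤ c * (nrm (y k))⁻¹ :=
    le_trans (le_max_left _ _) hL
  have hL2 : |((y k).2.2 : ℝ) - ξ ^ 2 * ((y k).1 : ℝ)| ≤ c * (nrm (y k))⁻¹ :=
    le_trans (le_max_right _ _) hL
  have hx0le : |((y k).1 : ℝ)| ≤ nrm (y k) := le_max_left _ _
  have h4 : c * (nrm (y k))⁻¹ * H ≤ c₁ / 4 := by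
    have h' : 4 * c * H ≤ nrm (y k) * c₁ := (div_le_iff₀ hc₁).mp hkB
    rw [show c * (nrm (y k))⁻¹ * H = c * H / nrm (y k) by ring,
      div_le_div_iff₀ hNpos (by norm_num : (0:ℝ) < 4)]
    linarith
  -- the key lower bound
  set m : ℤ := -(Q.coeff 2 * (y k).2.2 + Q.coeff 1 * (y k).2.1 + Q.coeff 0 * (y k).1) with hm
  have hdk := hdist k hki₀ m
  have e1 : ((y k).1 : ℝ) * (Polynomial.aeval ξ Q : ℝ) =
      (((y k).1 : ℝ) * ξ ^ 3 - (m : ℝ))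
        - ((Q.coeff 2 : ℤ) : ℝ) * (((y k).2.2 : ℝ) - ξ ^ 2 * ((y k).1 : ℝ))
        - ((Q.coeff 1 : ℤ) : ℝ) * (((y k).2.1 : ℝ) - ξ * ((y k).1 : ℝ)) := by
    rw [hQeval, hm]
    push_cast
    ring
  have t2 : |((Q.coeff 2 : ℤ) : ℝ) * (((y k).2.2 : ℝ) - ξ ^ 2 * ((y k).1 : ℝ))| ≤ c₁ / 4 := by
    rw [abs_mul]
    calc |((Q.coeff 2 : ℤ) : ℝ)| * |((y k).2.2 : ℝ) - ξ ^ 2 * ((y k).1 : ℝ)|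
        ≤ H * (c * (nrm (y k))⁻¹) :=
          mul_le_mul (hQc 2) hL2 (abs_nonneg _) hH0
      _ = c * (nrm (y k))⁻¹ * H := by ring
      _ ≤ c₁ / 4 := h4
  have t1 : |((Q.coeff 1 : ℤ) : ℝ) * (((y k).2.1 : ℝ) - ξ * ((y k).1 : ℝ))| ≤ c₁ / 4 := by
    rw [abs_mul]
    calc |((Q.coeff 1 : ℤ) : ℝ)| * |((y k).2.1 : ℝ) - ξ * ((y k).1 : ℝ)|
        ≤ H * (c * (nrm (y k))⁻¹) :=
          mul_le_mul (hQc 1) hL1 (abs_nonneg _) hH0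
      _ = c * (nrm (y k))⁻¹ * H := by ring
      _ ≤ c₁ / 4 := h4
  have key : c₁ / 2 ≤ |((y k).1 : ℝ) * (Polynomial.aeval ξ Q : ℝ)| := by
    set u : ℝ := ((y k).1 : ℝ) * ξ ^ 3 - (m : ℝ) with hu
    set v : ℝ := ((Q.coeff 2 : ℤ) : ℝ) * (((y k).2.2 : ℝ) - ξ ^ 2 * ((y k).1 : ℝ))
        + ((Q.coeff 1 : ℤ) : ℝ) * (((y k).2.1 : ℝ) - ξ * ((y k).1 : ℝ)) with hv
    have e2 : ((y k).1 : ℝ) * (Polynomial.aeval ξ Q : ℝ) = u - v := by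
      rw [e1, hu, hv]; ring
    have hvb : |v| ≤ c₁ / 2 := by
      calc |v| ≤ _ + _ := abs_add_le _ _
        _ ≤ c₁ / 4 + c₁ / 4 := add_le_add t2 t1
        _ = c₁ / 2 := by ring
    have habs : |u| - |v| ≤ |u - v| := by
      have := abs_sub_abs_le_abs_sub u v
      linarith
    rw [e2]
    linarith [hdk, hvb, habs]
  have hQlow : c₁ / (2 * nrm (y k)) ≤ |(Polynomial.aeval ξ Q : ℝ)| := by
    have habs : |((y k).1 : ℝ) * (Polynomial.aeval ξ Q : ℝ)|
        ≤ nrm (y k) * |(Polynomial.aeval ξ Q : ℝ)| := by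
      rw [abs_mul]
      exact mul_le_mul_of_nonneg_right hx0le (abs_nonneg _)
    rw [div_le_iff₀ (by linarith : (0:ℝ) < 2 * nrm (y k))]
    nlinarith [le_trans key habs]
  -- bound nrm (y k)
  have hfinal : min A D * H ^ (-golden) ≤ |(Polynomial.aeval ξ Q : ℝ)| := by
    have hHg : H ^ (-golden) ≤ 1 :=
      Real.rpow_le_one_of_one_le_of_nonpos hH1 (neg_nonpos.mpr golden_nonneg)
    have hHgpos : (0:ℝ) < H ^ golden := Real.rpow_pos_of_pos (by linarith) golden
    rcases eq_or_lt_of_le hki₀ with heq | hlt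
    · -- k = i₀
      have hNN : nrm (y k) = nrm (y i₀) := by rw [← heq]
      calc min A D * H ^ (-golden) ≤ A * 1 :=
            mul_le_mul (min_le_left _ _) hHg (Real.rpow_nonneg (by linarith) _) hApos.le
        _ = c₁ / (2 * nrm (y i₀)) := by rw [hA]; ring
        _ = c₁ / (2 * nrm (y k)) := by rw [hNN]
        _ ≤ |(Polynomial.aeval ξ Q : ℝ)| := hQlow
    · -- i₀ < k
      have hmin := hkmin (k - 1) (by omega)
      push_neg at hmin
      have hprev : nrm (y (k - 1)) < 4 * c * H / c₁ := hmin (by omega)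
      obtain ⟨-, hgrow, -⟩ := hc (k - 1) (by omega)
      have hkk1 : k - 1 + 1 = k := by omega
      rw [hkk1] at hgrow
      have hNle : nrm (y k) ≤ c * ((4 * c / c₁) ^ golden * H ^ golden) := by
        calc nrm (y k) ≤ c * nrm (y (k - 1)) ^ golden := hgrow
          _ ≤ c * (4 * c * H / c₁) ^ golden :=
            mul_le_mul_of_nonneg_left
              (Real.rpow_le_rpow (nrm_nonneg _) hprev.le golden_nonneg) hc0.le
          _ = c * ((4 * c / c₁) ^ golden * H ^ golden) := by
            rw [show (4 * c * H / c₁ : ℝ) = (4 * c / c₁) * H by ring,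
              Real.mul_rpow hB0pos.le hH0]
      have hrw : D * H ^ (-golden) = c₁ / (2 * (c * ((4 * c / c₁) ^ golden * H ^ golden))) := by
        rw [hD, Real.rpow_neg hH0, ← div_eq_mul_inv, div_div]
        rw [div_eq_div_iff (by positivity) (by positivity)]
        ring
      calc min A D * H ^ (-golden) ≤ D * H ^ (-golden) :=
            mul_le_mul_of_nonneg_right (min_le_right _ _)
              (Real.rpow_nonneg (by linarith) _)
        _ = c₁ / (2 * (c * ((4 * c / c₁) ^ golden * H ^ golden))) := hrw
        _ ≤ c₁ / (2 * nrm (y k)) := by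
            apply div_le_div_of_nonneg_left hc₁.le (by linarith) (by nlinarith)
        _ ≤ |(Polynomial.aeval ξ Q : ℝ)| := hQlow
  -- back to P
  have hQP : (Polynomial.aeval ξ Q : ℝ) =
      (Polynomial.aeval ξ P : ℝ) * ξ ^ (3 - P.natDegree) := by
    rw [hQdef]
    simp [_root_.map_mul, map_pow]
  have hbound : |(Polynomial.aeval ξ Q : ℝ)| ≤ |(Polynomial.aeval ξ P : ℝ)| * M ^ 3 := by
    rw [hQP, abs_mul, abs_pow]
    apply mul_le_mul_of_nonneg_left ?_ (abs_nonneg _)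
    calc |ξ| ^ (3 - P.natDegree) ≤ M ^ (3 - P.natDegree) :=
          pow_le_pow_left₀ (abs_nonneg _) (le_max_right _ _) _
      _ ≤ M ^ 3 := pow_le_pow_right₀ hM1 (by omega)
  rw [div_mul_eq_mul_div, div_le_iff₀ (pow_pos hM0 3)]
  calc min A D * H ^ (-golden) ≤ |(Polynomial.aeval ξ Q : ℝ)| := hfinal
    _ ≤ |(Polynomial.aeval ξ P : ℝ)| * M ^ 3 := hbound
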